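/- For every n ≥ 0, all sets T, B ⊆ [n], and all nonnegative integers a, b, the number of permutations σ ∈ S_n with Destop(σ) = T, Desbot(σ) = B, (2-31)σ = a, and (31-2)σ = b equals the number of permutations σ ∈ S_n with Destop(σ) = T, Desbot(σ) = B, (2-31)σ = b, and (31-2)σ = a. That is, the pairs of statistics (2-31, 31-2) and (31-2, 2-31) are jointly equidistributed on the set of permutations of [n] with fixed descent top set and fixed descent bottom set. -/

import Mathlib

open scoped Classical

/-- The 1-based `i`-th entry of a permutation `σ` of `{1,…,n}`, as a value in `{1,…,n}`
(one-line notation `σ(1)…σ(n)`). -/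
def entry {n : ℕ} (σ : Equiv.Perm (Fin n)) (i : ℕ) : ℕ :=
  if h : i - 1 < n then (σ ⟨i - 1, h⟩ : ℕ) + 1 else 0

/-- `σ` contains the pattern `π ∈ S_k` (given in 0-based one-line notation as a function):
there is a (not necessarily consecutive) subsequence of `σ` order-isomorphic to `π`. -/
def Contains {n k : ℕ} (π : Fin k → Fin k) (σ : Equiv.Perm (Fin n)) : Prop :=
  ∃ f : Fin k → Fin n, StrictMono f ∧ ∀ i j : Fin k, π i < π j ↔ σ (f i) < σ (f j)

/-- `σ` avoids the pattern `π`. -/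
def AvoidsPat {n k : ℕ} (π : Fin k → Fin k) (σ : Equiv.Perm (Fin n)) : Prop :=
  ¬ Contains π σ

/-- The descent set of `σ` (1-based positions `i ∈ [n-1]` with `σ(i) > σ(i+1)`). -/
def Des {n : ℕ} (σ : Equiv.Perm (Fin n)) : Finset ℕ :=
  (Finset.Icc 1 (n - 1)).filter (fun i => entry σ (i + 1) < entry σ i)

/-- The descent top set of `σ`: `{σ(i) : i ∈ Des σ}`. -/
def Destop {n : ℕ} (σ : Equiv.Perm (Fin n)) : Finset ℕ :=
  (Des σ).image (entry σ)

/-- The descent bottom set of `σ`: `{σ(i+1) : i ∈ Des σ}`. -/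
def Desbot {n : ℕ} (σ : Equiv.Perm (Fin n)) : Finset ℕ :=
  (Des σ).image (fun i => entry σ (i + 1))

/-- The ascent set of `σ` (1-based positions `i ∈ [n-1]` with `σ(i) < σ(i+1)`). -/
def Asc {n : ℕ} (σ : Equiv.Perm (Fin n)) : Finset ℕ :=
  (Finset.Icc 1 (n - 1)).filter (fun i => entry σ i < entry σ (i + 1))

/-- The ascent top set of `σ`: `{σ(i+1) : i ∈ Asc σ}`. -/
def Asctop {n : ℕ} (σ : Equiv.Perm (Fin n)) : Finset ℕ :=
  (Asc σ).image (fun i => entry σ (i + 1))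

/-- The ascent bottom set of `σ`: `{σ(i) : i ∈ Asc σ}`. -/
def Ascbot {n : ℕ} (σ : Equiv.Perm (Fin n)) : Finset ℕ :=
  (Asc σ).image (entry σ)

/-- The set of peak values of `σ`. -/
def Peak {n : ℕ} (σ : Equiv.Perm (Fin n)) : Finset ℕ :=
  Destop σ ∩ Asctop σ

/-- The set of valley values of `σ`. -/
def Val {n : ℕ} (σ : Equiv.Perm (Fin n)) : Finset ℕ :=
  Desbot σ ∩ Ascbot σ

/-- The set of left-to-right maxima (as values) of `σ`. -/
noncomputable def LRmax {n : ℕ} (σ : Equiv.Perm (Fin n)) : Finset ℕ :=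
  ((Finset.Icc 1 n).filter (fun i => ∀ j, 1 ≤ j → j < i → entry σ j < entry σ i)).image (entry σ)

/-- The set of left-to-right minima (as values) of `σ`. -/
noncomputable def LRmin {n : ℕ} (σ : Equiv.Perm (Fin n)) : Finset ℕ :=
  ((Finset.Icc 1 n).filter (fun i => ∀ j, 1 ≤ j → j < i → entry σ i < entry σ j)).image (entry σ)

/-- The set of right-to-left maxima (as values) of `σ`. -/
noncomputable def RLmax {n : ℕ} (σ : Equiv.Perm (Fin n)) : Finset ℕ :=
  ((Finset.Icc 1 n).filter (fun i => ∀ j, i < j → j ≤ n → entry σ j < entry σ i)).image (entry σ)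

/-- The set of right-to-left minima (as values) of `σ`. -/
noncomputable def RLmin {n : ℕ} (σ : Equiv.Perm (Fin n)) : Finset ℕ :=
  ((Finset.Icc 1 n).filter (fun i => ∀ j, i < j → j ≤ n → entry σ i < entry σ j)).image (entry σ)

/-- `(T, B)` is a descent matching: `T` and `B` are finite sets of positive integers
with `|T| = |B| = k`, and writing `T = {t_1 < … < t_k}`, `B = {b_1 < … < b_k}`,
we have `t_i > b_i` for all `i ∈ [k]`. -/
def DescentMatching (T B : Finset ℕ) : Prop :=
  T.card = B.card ∧ (∀ t ∈ T, 0 < t) ∧ (∀ b ∈ B, 0 < b) ∧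
    ∀ i < T.card, (B.sort (· ≤ ·)).getD i 0 < (T.sort (· ≤ ·)).getD i 0

/-- `(2_v 31)σ`: the number of occurrences of the vincular pattern `2-31` in `σ`
in which the "2" has value `v`. -/
def occ2_31at {n : ℕ} (σ : Equiv.Perm (Fin n)) (v : ℕ) : ℕ :=
  ((Finset.Icc 1 (n - 1) ×ˢ Finset.Icc 1 (n - 1)).filter
    (fun p => p.1 < p.2 ∧ entry σ (p.2 + 1) < entry σ p.2 ∧
      entry σ (p.2 + 1) < entry σ p.1 ∧ entry σ p.1 = v ∧ v < entry σ p.2)).card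

/-- `(31 2_v)σ`: the number of occurrences of the vincular pattern `31-2` in `σ`
in which the "2" has value `v`. -/
def occ31_2at {n : ℕ} (σ : Equiv.Perm (Fin n)) (v : ℕ) : ℕ :=
  ((Finset.Icc 1 (n - 1) ×ˢ Finset.Icc 1 n).filter
    (fun p => p.1 + 1 < p.2 ∧ entry σ (p.1 + 1) < entry σ p.1 ∧
      entry σ (p.1 + 1) < entry σ p.2 ∧ entry σ p.2 = v ∧ v < entry σ p.1)).card

/-- `(2-31)σ`: the number of occurrences of the vincular pattern `2-31` in `σ`. -/
def occ2_31 {n : ℕ} (σ : Equiv.Perm (Fin n)) : ℕ :=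
  ((Finset.Icc 1 (n - 1) ×ˢ Finset.Icc 1 (n - 1)).filter
    (fun p => p.1 < p.2 ∧ entry σ (p.2 + 1) < entry σ p.2 ∧
      entry σ (p.2 + 1) < entry σ p.1 ∧ entry σ p.1 < entry σ p.2)).card

/-- `(31-2)σ`: the number of occurrences of the vincular pattern `31-2` in `σ`. -/
def occ31_2 {n : ℕ} (σ : Equiv.Perm (Fin n)) : ℕ :=
  ((Finset.Icc 1 (n - 1) ×ˢ Finset.Icc 1 n).filter
    (fun p => p.1 + 1 < p.2 ∧ entry σ (p.1 + 1) < entry σ p.1 ∧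
      entry σ (p.1 + 1) < entry σ p.2 ∧ entry σ p.2 < entry σ p.1)).card

/-- The signature function `sg_{(T,B)}(i) = |B_{<i}| - |T_{≤i}| + 1`. -/
def sg (T B : Finset ℕ) (i : ℕ) : ℕ :=
  (B.filter (fun b => b < i)).card - (T.filter (fun t => t ≤ i)).card + 1

/-- The `(p,q)`-integer `[m]_{p,q} = Σ_{a+b=m-1} p^a q^b`. -/
def genQInt {R : Type*} [CommRing R] (m : ℕ) (p q : R) : R :=
  ∑ a ∈ Finset.range m, p ^ a * q ^ (m - 1 - a)

/-- The reverse complement of `σ`: `σ^{rc}(i) = n + 1 - σ(n + 1 - i)`. -/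
def revComp {n : ℕ} (σ : Equiv.Perm (Fin n)) : Equiv.Perm (Fin n) :=
  (Fin.revPerm.trans σ).trans Fin.revPerm

/-!
Write `σ` as the word `w = σ(1)…σ(n)`. A descent `w_i > w_{i+1}` straddles a value `v` when
`w_{i+1} < v < w_i`. The straddling descents to the left of `v` are the occurrences of `31-2`
whose `2` is `v`, those to its right the occurrences of `2-31` whose `2` is `v`, and there are
`|B_{<v}| - |T_{≤v}| = sg_{(T,B)}(v) - 1` straddling descents in all. So if `f(v)` counts those on
the left, `sg(v) - 1 - f(v)` count those on the right.

The map `σ ↦ f` is a bijection from the permutations with descent tops `T` and descent bottoms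
`B` onto the functions with `f(v) < sg(v)` on `[n]`, as one sees by peeling off letters from the
right: the last letter is the largest `v ∉ T` with `f(v) = sg(v) - 1`, and if it lies in `B`, the
letter before it is the smallest `t` above it with `f(t) = sg(t) - 1`. Hence `f ↦ sg - 1 - f`
induces an involution on these permutations which exchanges the statistics `2-31` and `31-2`.
-/

namespace DescentWord

open Finset

def descents (L : List ℕ) : Finset ℕ :=
  (range (L.length - 1)).filter fun i => L.getD (i + 1) 0 < L.getD i 0

def descTops (L : List ℕ) : Finset ℕ := (descents L).image fun i => L.getD i 0

def descBots (L : List ℕ) : Finset ℕ := (descents L).image fun i => L.getD (i + 1) 0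

def straddles (L : List ℕ) (v : ℕ) : Finset ℕ :=
  (range (L.length - 1)).filter fun i => L.getD (i + 1) 0 < v ∧ v < L.getD i 0

noncomputable def leftStraddles (L : List ℕ) (v : ℕ) : ℕ :=
  #((straddles L v).filter fun i => i + 1 < L.idxOf v)

noncomputable def rightStraddles (L : List ℕ) (v : ℕ) : ℕ :=
  #((straddles L v).filter fun i => L.idxOf v < i)

section Word

variable {L : List ℕ} {i j v : ℕ}

theorem mem_descents : i ∈ descents L ↔ i + 1 < L.length ∧ L.getD (i + 1) 0 < L.getD i 0 := by
  simp only [descents, mem_filter, mem_range]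
  omega

theorem mem_straddles :
    i ∈ straddles L v ↔ i + 1 < L.length ∧ L.getD (i + 1) 0 < v ∧ v < L.getD i 0 := by
  simp only [straddles, mem_filter, mem_range]
  omega

theorem getD_inj (hL : L.Nodup) (hi : i < L.length) (hj : j < L.length) :
    L.getD i 0 = L.getD j 0 ↔ i = j := by
  rw [List.getD_eq_getElem _ _ hi, List.getD_eq_getElem _ _ hj, hL.getElem_inj_iff]

theorem idxOf_eq_iff (hL : L.Nodup) (hi : i < L.length) : L.idxOf v = i ↔ L.getD i 0 = v := by
  grind

theorem descTops_subset : descTops L ⊆ L.toFinset := by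
  simp only [descTops, image_subset_iff, List.mem_toFinset, mem_descents]
  grind

theorem descBots_subset : descBots L ⊆ L.toFinset := by
  simp only [descBots, image_subset_iff, List.mem_toFinset, mem_descents]
  grind

theorem getLastD_eq_getD : L.getLastD 0 = L.getD (L.length - 1) 0 := by
  grind

theorem getLastD_notMem_descTops (hL : L.Nodup) : L.getLastD 0 ∉ descTops L := by
  simp only [descTops, mem_image, mem_descents, not_exists, not_and]
  intro i hi h
  rw [getLastD_eq_getD] at h
  have := (getD_inj hL (by omega) (by omega)).1 h
  omega

theorem injOn_getD_descents (hL : L.Nodup) : Set.InjOn (fun i => L.getD i 0) (descents L) :=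
  fun _ hi _ hj h => (getD_inj hL (mem_descents.1 hi).1.le (mem_descents.1 hj).1.le).1 h

theorem injOn_getD_succ_descents (hL : L.Nodup) :
    Set.InjOn (fun i => L.getD (i + 1) 0) (descents L) :=
  fun _ hi _ hj h =>
    Nat.succ_injective ((getD_inj hL (mem_descents.1 hi).1 (mem_descents.1 hj).1).1 h)

theorem card_descTops (hL : L.Nodup) : #(descTops L) = #(descBots L) := by
  rw [descTops, descBots, card_image_of_injOn (injOn_getD_descents hL),
    card_image_of_injOn (injOn_getD_succ_descents hL)]

theorem card_filter_descTops (hL : L.Nodup) (p : ℕ → Prop) [DecidablePred p] :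
    #((descTops L).filter p) = #((descents L).filter fun i => p (L.getD i 0)) := by
  rw [descTops, filter_image]
  exact card_image_of_injOn ((injOn_getD_descents hL).mono (filter_subset _ _))

theorem card_filter_descBots (hL : L.Nodup) (p : ℕ → Prop) [DecidablePred p] :
    #((descBots L).filter p) = #((descents L).filter fun i => p (L.getD (i + 1) 0)) := by
  rw [descBots, filter_image]
  exact card_image_of_injOn ((injOn_getD_succ_descents hL).mono (filter_subset _ _))

theorem card_filter_descTops_le (hL : L.Nodup) (v : ℕ) :
    #((descTops L).filter (· ≤ v)) ≤ #((descBots L).filter (· < v)) := by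
  rw [card_filter_descTops hL, card_filter_descBots hL]
  exact card_le_card fun i => by simp only [mem_filter, mem_descents]; omega

theorem card_straddles_add_one (hL : L.Nodup) (v : ℕ) :
    #(straddles L v) + 1 = sg (descTops L) (descBots L) v := by
  have hsdiff : straddles L v = (descents L).filter (fun i => L.getD (i + 1) 0 < v) \
      (descents L).filter (fun i => L.getD i 0 ≤ v) := by
    ext i
    simp only [mem_straddles, mem_sdiff, mem_filter, mem_descents]
    omega
  have hsub : (descents L).filter (fun i => L.getD i 0 ≤ v) ⊆
      (descents L).filter (fun i => L.getD (i + 1) 0 < v) :=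
    fun i => by simp only [mem_filter, mem_descents]; omega
  rw [sg, card_filter_descTops hL, card_filter_descBots hL, hsdiff, card_sdiff_of_subset hsub]

theorem leftStraddles_add_rightStraddles (hL : L.Nodup) (hv : v ∈ L) :
    leftStraddles L v + rightStraddles L v + 1 = sg (descTops L) (descBots L) v := by
  have hk : L.getD (L.idxOf v) 0 = v := by grind
  have hright : (straddles L v).filter (fun i => L.idxOf v < i) =
      (straddles L v).filter (fun i => ¬ i + 1 < L.idxOf v) := by
    refine filter_congr fun i hi => ?_
    rw [mem_straddles] at hi
    have : i ≠ L.idxOf v := fun h => by rw [← h] at hk; omega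
    have : i + 1 ≠ L.idxOf v := fun h => by rw [← h] at hk; omega
    omega
  rw [← card_straddles_add_one hL, leftStraddles, rightStraddles, hright,
    card_filter_add_card_filter_not]

theorem rightStraddles_pos {k j : ℕ} (hL : L.Nodup) (hkj : k < j) (hj : j < L.length)
    (hlt : L.getD j 0 < L.getD k 0) (htop : L.getD k 0 ∉ descTops L) :
    0 < rightStraddles L (L.getD k 0) := by
  set v := L.getD k 0
  have hex : ∃ j, k < j ∧ j < L.length ∧ L.getD j 0 < v := ⟨j, hkj, hj, hlt⟩
  obtain ⟨hkj₀, hj₀, hj₀v⟩ := Nat.find_spec hex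
  set j₀ := Nat.find hex
  have hmin := Nat.find_min hex (show j₀ - 1 < j₀ by omega)
  have hidx : L.idxOf v = k := (idxOf_eq_iff hL (by omega)).2 rfl
  have hk : k ≠ j₀ - 1 := by
    intro hk
    refine htop (mem_image.2 ⟨k, mem_descents.2 ⟨by omega, ?_⟩, rfl⟩)
    rwa [show k + 1 = j₀ by omega]
  have hne : L.getD (j₀ - 1) 0 ≠ v := fun h => hk ((getD_inj hL (by omega) (by omega)).1 h).symm
  rw [rightStraddles, card_pos]
  refine ⟨j₀ - 1, mem_filter.2 ⟨mem_straddles.2 ⟨by omega, ?_, by omega⟩, by omega⟩⟩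
  rwa [show j₀ - 1 + 1 = j₀ by omega]

end Word

section Append

/- `[].getLastD 0 = 0`, so a hypothesis `z < M.getLastD 0` says that `M` is nonempty and that
appending `z` creates a new descent. -/

variable {M : List ℕ} {i v z : ℕ}

theorem mem_descents_append :
    i ∈ descents (M ++ [z]) ↔ i ∈ descents M ∨ i + 1 = M.length ∧ z < M.getD i 0 := by
  simp only [mem_descents]
  grind

theorem descents_append_of_le (h : M.getLastD 0 ≤ z) : descents (M ++ [z]) = descents M := by
  rw [getLastD_eq_getD] at h
  ext i
  rw [mem_descents_append]
  grind

theorem descents_append_of_lt (h : z < M.getLastD 0) :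
    descents (M ++ [z]) = insert (M.length - 1) (descents M) := by
  rw [getLastD_eq_getD] at h
  ext i
  rw [mem_descents_append, mem_insert]
  grind [mem_descents]

theorem descTops_append_of_le (h : M.getLastD 0 ≤ z) : descTops (M ++ [z]) = descTops M := by
  rw [descTops, descTops, descents_append_of_le h]
  exact image_congr fun i hi => by grind [mem_descents]

theorem descBots_append_of_le (h : M.getLastD 0 ≤ z) : descBots (M ++ [z]) = descBots M := by
  rw [descBots, descBots, descents_append_of_le h]
  exact image_congr fun i hi => by grind [mem_descents]

theorem descTops_append_of_lt (h : z < M.getLastD 0) :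
    descTops (M ++ [z]) = insert (M.getLastD 0) (descTops M) := by
  rw [descTops, descTops, descents_append_of_lt h, image_insert, getLastD_eq_getD]
  grind [mem_descents]

theorem descBots_append_of_lt (h : z < M.getLastD 0) :
    descBots (M ++ [z]) = insert z (descBots M) := by
  rw [descBots, descBots, descents_append_of_lt h, image_insert]
  grind [mem_descents]

theorem leftStraddles_append (hv : v ∈ M) :
    leftStraddles (M ++ [z]) v = leftStraddles M v := by
  rw [leftStraddles, leftStraddles, List.idxOf_append_of_mem hv]
  congr 1
  ext i
  simp only [mem_filter, mem_straddles]
  grind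

theorem leftStraddles_append_self (hz : z ∉ M) :
    leftStraddles (M ++ [z]) z = #(straddles (M ++ [z]) z) := by
  rw [leftStraddles, filter_true_of_mem]
  simp only [mem_straddles]
  grind

theorem rightStraddles_append_self (hz : z ∉ M) : rightStraddles (M ++ [z]) z = 0 := by
  rw [rightStraddles, card_eq_zero, filter_eq_empty_iff]
  simp only [mem_straddles]
  grind

theorem rightStraddles_append_getLastD (hL : (M ++ [z]).Nodup) :
    rightStraddles (M ++ [z]) (M.getLastD 0) = 0 := by
  rw [rightStraddles, card_eq_zero, filter_eq_empty_iff, getLastD_eq_getD]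
  simp only [mem_straddles]
  grind

theorem rightStraddles_append_pos (hv : v ∈ M) (hzv : z < v)
    (hvw : v < M.getLastD 0) : 0 < rightStraddles (M ++ [z]) v := by
  rw [rightStraddles, card_pos]
  refine ⟨M.length - 1, mem_filter.2 ⟨mem_straddles.2 ?_, ?_⟩⟩
  all_goals rw [getLastD_eq_getD] at hvw; grind

end Append

structure Admissible (S T B : Finset ℕ) : Prop where
  tops_subset : T ⊆ S
  bots_subset : B ⊆ S
  card_tops : #T = #B
  card_filter_tops_le : ∀ v ∈ S, #(T.filter (· ≤ v)) ≤ #(B.filter (· < v))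

structure Realizes (L : List ℕ) (S T B : Finset ℕ) (f : ℕ → ℕ) : Prop where
  nodup : L.Nodup
  toFinset_eq : L.toFinset = S
  descTops_eq : descTops L = T
  descBots_eq : descBots L = B
  leftStraddles_eq : ∀ v ∈ S, leftStraddles L v = f v

namespace Realizes

variable {L M : List ℕ} {S T B : Finset ℕ} {f : ℕ → ℕ} {v z : ℕ}

theorem nil (f : ℕ → ℕ) : Realizes [] ∅ ∅ ∅ f where
  nodup := List.nodup_nil
  toFinset_eq := rfl
  descTops_eq := rfl
  descBots_eq := rfl
  leftStraddles_eq := by simp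

theorem add_rightStraddles (h : Realizes L S T B f) (hv : v ∈ S) :
    f v + rightStraddles L v + 1 = sg T B v := by
  rw [← h.leftStraddles_eq v hv, ← h.descTops_eq, ← h.descBots_eq]
  exact leftStraddles_add_rightStraddles h.nodup (by simpa [← h.toFinset_eq] using hv)

theorem rightStraddles_eq_zero_iff (h : Realizes L S T B f) (hv : v ∈ S) :
    rightStraddles L v = 0 ↔ f v + 1 = sg T B v := by
  have := h.add_rightStraddles hv
  omega

theorem admissible (h : Realizes L S T B f) : Admissible S T B := by
  obtain ⟨hL, rfl, rfl, rfl, -⟩ := h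
  exact ⟨descTops_subset, descBots_subset, card_descTops hL,
    fun v _ => card_filter_descTops_le hL v⟩

theorem append (h : Realizes M S T B f) (hz : z ∉ S)
    (hf : f z + 1 = sg (descTops (M ++ [z])) (descBots (M ++ [z])) z) :
    Realizes (M ++ [z]) (insert z S) (descTops (M ++ [z])) (descBots (M ++ [z])) f := by
  obtain ⟨hM, rfl, rfl, rfl, hleft⟩ := h
  rw [List.mem_toFinset] at hz
  have hMz : (M ++ [z]).Nodup := List.concat_eq_append ▸ hM.concat hz
  refine ⟨hMz, by ext; simp, rfl, rfl, fun v hv => ?_⟩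
  rcases mem_insert.1 hv with rfl | hv
  · have := card_straddles_add_one hMz v
    rw [leftStraddles_append_self hz]
    omega
  · rw [leftStraddles_append (List.mem_toFinset.1 hv), hleft v hv]

theorem notMem_and_nodup (h : Realizes (M ++ [z]) S T B f) : z ∉ M ∧ M.Nodup :=
  (List.nodup_concat M z).1 (List.concat_eq_append ▸ h.nodup)

theorem lt_getLastD_iff (h : Realizes (M ++ [z]) S T B f) : z < M.getLastD 0 ↔ z ∈ B := by
  have hzM := h.notMem_and_nodup.1
  rw [← h.descBots_eq]
  constructor
  · intro hlt
    rw [descBots_append_of_lt hlt]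
    exact mem_insert_self _ _
  · intro hz
    by_contra hle
    rw [descBots_append_of_le (not_lt.1 hle)] at hz
    exact hzM (List.mem_toFinset.1 (descBots_subset hz))

theorem isGreatest_getLast (h : Realizes (M ++ [z]) S T B f) :
    IsGreatest {v | v ∈ S ∧ v ∉ T ∧ f v + 1 = sg T B v} z := by
  have hzS : z ∈ S := h.toFinset_eq ▸ List.mem_toFinset.2 (by simp)
  refine ⟨⟨hzS, ?_, ?_⟩, fun v ⟨hvS, hvT, hfv⟩ => ?_⟩
  · rw [← h.descTops_eq]
    simpa using getLastD_notMem_descTops h.nodup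
  · rw [← h.rightStraddles_eq_zero_iff hzS]
    exact rightStraddles_append_self h.notMem_and_nodup.1
  · by_contra! hzv
    have hvM : v ∈ M := by
      have := List.mem_toFinset.1 (h.toFinset_eq ▸ hvS)
      simp only [List.mem_append, List.mem_singleton] at this
      exact this.resolve_right hzv.ne'
    have hidx : (M ++ [z]).getD ((M ++ [z]).idxOf v) 0 = v := by grind
    have hpos := rightStraddles_pos (j := M.length) h.nodup
      (List.idxOf_append_of_mem hvM ▸ List.idxOf_lt_length_of_mem hvM) (by simp)
      (by grind) (by rw [hidx, h.descTops_eq]; exact hvT)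
    rw [hidx, (h.rightStraddles_eq_zero_iff hvS).2 hfv] at hpos
    exact hpos.false

theorem isLeast_getLastD (h : Realizes (M ++ [z]) S T B f) (hz : z ∈ B) :
    IsLeast {t | t ∈ S ∧ z < t ∧ f t + 1 = sg T B t} (M.getLastD 0) := by
  have hlt := h.lt_getLastD_iff.2 hz
  have hwS : M.getLastD 0 ∈ S := by
    rw [getLastD_eq_getD] at hlt
    rw [← h.toFinset_eq, List.mem_toFinset, getLastD_eq_getD]
    grind
  refine ⟨⟨hwS, hlt, ?_⟩, fun t ⟨htS, hzt, hft⟩ => ?_⟩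
  · rw [← h.rightStraddles_eq_zero_iff hwS]
    exact rightStraddles_append_getLastD h.nodup
  · by_contra! htw
    have htM : t ∈ M := by
      have := List.mem_toFinset.1 (h.toFinset_eq ▸ htS)
      simp only [List.mem_append, List.mem_singleton] at this
      exact this.resolve_right hzt.ne'
    have hpos := rightStraddles_append_pos htM hzt htw
    rw [(h.rightStraddles_eq_zero_iff htS).2 hft] at hpos
    exact hpos.false

theorem dropLast (h : Realizes (M ++ [z]) S T B f) :
    Realizes M (S.erase z) (descTops M) (descBots M) f := by
  obtain ⟨hzM, hM⟩ := h.notMem_and_nodup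
  refine ⟨hM, ?_, rfl, rfl, fun v hv => ?_⟩
  · rw [← h.toFinset_eq, List.toFinset_append, List.toFinset_cons, List.toFinset_nil,
      insert_empty, union_singleton, erase_insert (by simpa using hzM)]
  · have hvM : v ∈ M := by
      have := List.mem_toFinset.1 (h.toFinset_eq ▸ mem_of_mem_erase hv)
      simpa [ne_of_mem_erase hv] using this
    rw [← leftStraddles_append (z := z) hvM, h.leftStraddles_eq v (mem_of_mem_erase hv)]

theorem dropLast_of_notMem (h : Realizes (M ++ [z]) S T B f) (hz : z ∉ B) :
    Realizes M (S.erase z) T B f := by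
  have hle : M.getLastD 0 ≤ z := not_lt.1 (mt h.lt_getLastD_iff.1 hz)
  have := h.dropLast
  rwa [← descTops_append_of_le hle, ← descBots_append_of_le hle, h.descTops_eq,
    h.descBots_eq] at this

theorem dropLast_of_mem (h : Realizes (M ++ [z]) S T B f) (hz : z ∈ B) :
    Realizes M (S.erase z) (T.erase (M.getLastD 0)) (B.erase z) f := by
  have hlt := h.lt_getLastD_iff.2 hz
  obtain ⟨hzM, hM⟩ := h.notMem_and_nodup
  have hzB : z ∉ descBots M := fun hz => hzM (List.mem_toFinset.1 (descBots_subset hz))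
  have := h.dropLast
  rwa [← erase_insert (getLastD_notMem_descTops hM), ← descTops_append_of_lt hlt,
    ← erase_insert hzB, ← descBots_append_of_lt hlt, h.descTops_eq, h.descBots_eq] at this

theorem unique (hL : Realizes L S T B f) (hM : Realizes M S T B f) : L = M := by
  induction L using List.reverseRecOn generalizing M S T B with
  | nil =>
    exact ((List.toFinset_eq_empty_iff M).1 (hM.toFinset_eq.trans hL.toFinset_eq.symm)).symm
  | append_singleton L₀ z ih =>
    obtain ⟨M₀, y, rfl⟩ : ∃ M₀ y, M = M₀ ++ [y] := by
      rcases M.eq_nil_or_concat with rfl | ⟨M₀, y, rfl⟩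
      · exact absurd (hM.toFinset_eq.trans hL.toFinset_eq.symm).symm (by simp)
      · exact ⟨M₀, y, List.concat_eq_append ..⟩
    obtain rfl : z = y := hL.isGreatest_getLast.unique hM.isGreatest_getLast
    by_cases hzB : z ∈ B
    · have hw := (hL.isLeast_getLastD hzB).unique (hM.isLeast_getLastD hzB)
      rw [ih (hL.dropLast_of_mem hzB) (hw ▸ hM.dropLast_of_mem hzB)]
    · rw [ih (hL.dropLast_of_notMem hzB) (hM.dropLast_of_notMem hzB)]

end Realizes

theorem card_filter_erase_add {α : Type*} [DecidableEq α] {s : Finset α} {a : α} (ha : a ∈ s)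
    (p : α → Prop) [DecidablePred p] :
    #((s.erase a).filter p) + (if p a then 1 else 0) = #(s.filter p) := by
  rw [filter_erase]
  split_ifs with hp
  · exact card_erase_add_one (mem_filter.2 ⟨ha, hp⟩)
  · rw [erase_eq_of_notMem fun h => hp (mem_filter.1 h).2, add_zero]

theorem sg_erase_erase_of_le {T B : Finset ℕ} {w z v : ℕ} (hwT : w ∈ T) (hzB : z ∈ B)
    (hzw : z < w) (hwv : w ≤ v) : sg (T.erase w) (B.erase z) v = sg T B v := by
  have ht := card_filter_erase_add hwT (· ≤ v)
  have hb := card_filter_erase_add hzB (· < v)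
  simp only [sg]
  split_ifs at ht hb <;> omega

namespace Admissible

variable {S T B : Finset ℕ} {f : ℕ → ℕ} {w z : ℕ}

theorem exists_isGreatest (h : Admissible S T B) (hS : S.Nonempty)
    (hf : ∀ v ∈ S, f v < sg T B v) :
    ∃ z, IsGreatest {v | v ∈ S ∧ v ∉ T ∧ f v + 1 = sg T B v} z := by
  set m := S.min' hS
  have hB : #(B.filter (· < m)) = 0 := card_eq_zero.2 <|
    filter_eq_empty_iff.2 fun b hb => not_lt.2 (S.min'_le b (h.bots_subset hb))
  have hT : #(T.filter (· ≤ m)) = 0 := by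
    have := h.card_filter_tops_le m (S.min'_mem hS)
    omega
  have hmT : m ∉ T := fun hmT =>
    (card_ne_zero.2 ⟨m, mem_filter.2 ⟨hmT, le_rfl⟩⟩ : #(T.filter (· ≤ m)) ≠ 0) hT
  have hfm := hf m (S.min'_mem hS)
  have hsg : sg T B m = 1 := by rw [sg, hB, hT]
  have hC : (S.filter fun v => v ∉ T ∧ f v + 1 = sg T B v).Nonempty :=
    ⟨m, mem_filter.2 ⟨S.min'_mem hS, hmT, by omega⟩⟩
  exact ⟨_, by simpa using isGreatest_max' _ hC⟩

theorem exists_isLeast (h : Admissible S T B) (hf : ∀ v ∈ S, f v < sg T B v) (hzB : z ∈ B) :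
    ∃ w, IsLeast {t | t ∈ S ∧ z < t ∧ f t + 1 = sg T B t} w := by
  have hS : S.Nonempty := ⟨z, h.bots_subset hzB⟩
  set m := S.max' hS
  have hle := h.card_filter_tops_le m (S.max'_mem hS)
  rw [filter_true_of_mem fun t ht => S.le_max' t (h.tops_subset ht), h.card_tops] at hle
  have hmB : m ∉ B := fun hmB =>
    (card_lt_card (filter_ssubset.2 ⟨m, hmB, lt_irrefl m⟩ : B.filter (· < m) ⊂ B)).not_ge hle
  have hBm : B.filter (· < m) = B := filter_true_of_mem fun b hb =>
    lt_of_le_of_ne (S.le_max' b (h.bots_subset hb)) fun hbm => hmB (hbm ▸ hb)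
  have hfm := hf m (S.max'_mem hS)
  have hsg : sg T B m = 1 := by
    rw [sg, hBm, filter_true_of_mem fun t ht => S.le_max' t (h.tops_subset ht), h.card_tops]
    omega
  have hzm : z < m := lt_of_le_of_ne (S.le_max' z (h.bots_subset hzB)) fun hzm => hmB (hzm ▸ hzB)
  have hC : (S.filter fun t => z < t ∧ f t + 1 = sg T B t).Nonempty :=
    ⟨m, mem_filter.2 ⟨S.max'_mem hS, hzm, by omega⟩⟩
  exact ⟨_, by simpa using isLeast_min' _ hC⟩

theorem erase (h : Admissible S T B) (hzT : z ∉ T) (hzB : z ∉ B) :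
    Admissible (S.erase z) T B where
  tops_subset := erase_eq_of_notMem hzT ▸ erase_subset_erase z h.tops_subset
  bots_subset := erase_eq_of_notMem hzB ▸ erase_subset_erase z h.bots_subset
  card_tops := h.card_tops
  card_filter_tops_le v hv := h.card_filter_tops_le v (mem_of_mem_erase hv)

theorem erase_erase (h : Admissible S T B) (hf : ∀ v ∈ S, f v < sg T B v) (hwT : w ∈ T)
    (hzB : z ∈ B) (hzT : z ∉ T) (hgap : ∀ v ∈ S, z < v → v < w → f v + 1 < sg T B v) :
    Admissible (S.erase z) (T.erase w) (B.erase z) ∧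
      ∀ v ∈ S.erase z, f v < sg (T.erase w) (B.erase z) v := by
  have hcount : ∀ v ∈ S.erase z,
      #((T.erase w).filter (· ≤ v)) ≤ #((B.erase z).filter (· < v)) ∧
        f v < sg (T.erase w) (B.erase z) v := by
    intro v hv
    obtain ⟨hvz, hvS⟩ := mem_erase.1 hv
    have ht := card_filter_erase_add hwT (· ≤ v)
    have hb := card_filter_erase_add hzB (· < v)
    have hle := h.card_filter_tops_le v hvS
    have hfv := hf v hvS
    have hgapv := hgap v hvS
    simp only [sg] at hfv hgapv ⊢
    split_ifs at ht hb <;> omega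
  refine ⟨⟨?_, erase_subset_erase z h.bots_subset, ?_, fun v hv => (hcount v hv).1⟩,
    fun v hv => (hcount v hv).2⟩
  · exact (erase_subset w T).trans (erase_eq_of_notMem hzT ▸ erase_subset_erase z h.tops_subset)
  · rw [card_erase_of_mem hwT, card_erase_of_mem hzB, h.card_tops]

end Admissible

namespace Realizes

variable {L₀ : List ℕ} {S T B : Finset ℕ} {f : ℕ → ℕ} {w z : ℕ}

theorem append_of_isGreatest (h₀ : Realizes L₀ (S.erase z) T B f)
    (hz : IsGreatest {v | v ∈ S ∧ v ∉ T ∧ f v + 1 = sg T B v} z) :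
    Realizes (L₀ ++ [z]) S T B f := by
  obtain ⟨⟨hzS, -, hfz⟩, hzmax⟩ := hz
  have hle : L₀.getLastD 0 ≤ z := by
    rcases L₀.eq_nil_or_concat with rfl | ⟨L₁, y, rfl⟩
    · exact Nat.zero_le z
    rw [List.concat_eq_append] at h₀ ⊢
    obtain ⟨hyS, hyT, hfy⟩ := h₀.isGreatest_getLast.1
    rw [List.getLastD_concat]
    exact hzmax ⟨mem_of_mem_erase hyS, hyT, hfy⟩
  have hT : descTops (L₀ ++ [z]) = T := by rw [descTops_append_of_le hle, h₀.descTops_eq]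
  have hB : descBots (L₀ ++ [z]) = B := by rw [descBots_append_of_le hle, h₀.descBots_eq]
  simpa only [hT, hB, insert_erase hzS] using h₀.append (notMem_erase z S) (by rwa [hT, hB])

theorem append_of_isGreatest_of_isLeast (h₀ : Realizes L₀ (S.erase z) (T.erase w) (B.erase z) f)
    (hz : IsGreatest {v | v ∈ S ∧ v ∉ T ∧ f v + 1 = sg T B v} z)
    (hw : IsLeast {t | t ∈ S ∧ z < t ∧ f t + 1 = sg T B t} w) (hzB : z ∈ B)
    (hwT : w ∈ T) :
    Realizes (L₀ ++ [z]) S T B f := by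
  obtain ⟨⟨hzS, -, hfz⟩, hzmax⟩ := hz
  obtain ⟨⟨hwS, hzw, hfw⟩, -⟩ := hw
  have hsg : ∀ v, w ≤ v → sg (T.erase w) (B.erase z) v = sg T B v :=
    fun v => sg_erase_erase_of_le hwT hzB hzw
  have hlast : L₀.getLastD 0 = w := by
    rcases L₀.eq_nil_or_concat with rfl | ⟨L₁, y, rfl⟩
    · have := h₀.toFinset_eq ▸ mem_erase.2 ⟨hzw.ne', hwS⟩
      simp at this
    rw [List.concat_eq_append] at h₀ ⊢
    rw [List.getLastD_concat]
    have hy := h₀.isGreatest_getLast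
    have hwy : w ≤ y :=
      hy.2 ⟨mem_erase.2 ⟨hzw.ne', hwS⟩, notMem_erase w T, hsg w le_rfl ▸ hfw⟩
    obtain ⟨hyS, hyT, hfy⟩ := hy.1
    by_contra hyw
    have hyT : y ∉ T := fun hyT' => hyT (mem_erase.2 ⟨hyw, hyT'⟩)
    have hyz : y ≤ z := hzmax ⟨mem_of_mem_erase hyS, hyT, hsg y hwy ▸ hfy⟩
    omega
  have hlt : z < L₀.getLastD 0 := hlast ▸ hzw
  have hT : descTops (L₀ ++ [z]) = T := by
    rw [descTops_append_of_lt hlt, h₀.descTops_eq, hlast, insert_erase hwT]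
  have hB : descBots (L₀ ++ [z]) = B := by
    rw [descBots_append_of_lt hlt, h₀.descBots_eq, insert_erase hzB]
  simpa only [hT, hB, insert_erase hzS] using h₀.append (notMem_erase z S) (by rwa [hT, hB])

end Realizes

theorem exists_realizes (S : Finset ℕ) {T B : Finset ℕ} {f : ℕ → ℕ} (h : Admissible S T B)
    (hf : ∀ v ∈ S, f v < sg T B v) : ∃ L, Realizes L S T B f := by
  induction S using Finset.strongInduction generalizing T B with
  | H S ih =>
  rcases S.eq_empty_or_nonempty with rfl | hS
  · obtain rfl := subset_empty.1 h.tops_subset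
    obtain rfl := subset_empty.1 h.bots_subset
    exact ⟨[], Realizes.nil f⟩
  obtain ⟨z, hz⟩ := h.exists_isGreatest hS hf
  have hzS : S.erase z ⊂ S := erase_ssubset hz.1.1
  by_cases hzB : z ∈ B
  · obtain ⟨w, hw⟩ := h.exists_isLeast hf hzB
    have hwT : w ∈ T := by
      by_contra hwT
      exact (hz.2 ⟨hw.1.1, hwT, hw.1.2.2⟩).not_gt hw.1.2.1
    have hgap : ∀ v ∈ S, z < v → v < w → f v + 1 < sg T B v := by
      intro v hvS hzv hvw
      refine lt_of_le_of_ne (hf v hvS) fun hfv => ?_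
      by_cases hvT : v ∈ T
      · exact (hw.2 ⟨hvS, hzv, hfv⟩).not_gt hvw
      · exact (hz.2 ⟨hvS, hvT, hfv⟩).not_gt hzv
    obtain ⟨h', hf'⟩ := h.erase_erase hf hwT hzB hz.1.2.1 hgap
    obtain ⟨L₀, h₀⟩ := ih _ hzS h' hf'
    exact ⟨_, h₀.append_of_isGreatest_of_isLeast hz hw hzB hwT⟩
  · obtain ⟨L₀, h₀⟩ :=
      ih _ hzS (h.erase hz.1.2.1 hzB) fun v hv => hf v (mem_of_mem_erase hv)
    exact ⟨_, h₀.append_of_isGreatest hz⟩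

section Perm

variable {n : ℕ}

def word (σ : Equiv.Perm (Fin n)) : List ℕ := List.ofFn fun i => (σ i : ℕ) + 1

theorem length_word (σ : Equiv.Perm (Fin n)) : (word σ).length = n := by
  simp [word]

theorem entry_eq_getD (σ : Equiv.Perm (Fin n)) (i : ℕ) :
    entry σ i = (word σ).getD (i - 1) 0 := by
  unfold entry
  split_ifs with h
  · rw [List.getD_eq_getElem _ _ (by simpa [length_word] using h)]
    simp [word]
  · rw [List.getD_eq_default _ _ (by simp [length_word]; omega)]

theorem nodup_word (σ : Equiv.Perm (Fin n)) : (word σ).Nodup :=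
  List.nodup_ofFn.2 fun i j h => σ.injective (Fin.ext (by simpa using h))

theorem toFinset_word (σ : Equiv.Perm (Fin n)) : (word σ).toFinset = Icc 1 n := by
  ext v
  simp only [word, List.mem_toFinset, List.mem_ofFn, mem_Icc]
  constructor
  · rintro ⟨i, rfl⟩
    omega
  · intro hv
    exact ⟨σ.symm ⟨v - 1, by omega⟩, by simp; omega⟩

theorem word_injective : Function.Injective (word (n := n)) := fun σ τ h =>
  Equiv.ext fun i => Fin.ext (by simpa [word] using congrFun (List.ofFn_injective h) i)

theorem exists_word_eq {L : List ℕ} (hL : L.Nodup) (hS : L.toFinset = Icc 1 n) :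
    ∃ σ : Equiv.Perm (Fin n), word σ = L := by
  have hlen : L.length = n := by
    rw [← List.toFinset_card_of_nodup hL, hS, Nat.card_Icc, Nat.add_sub_cancel]
  have hmem (i : Fin n) : L.getD i 0 ∈ Icc 1 n := hS ▸ List.mem_toFinset.2 (by grind)
  let g (i : Fin n) : Fin n := ⟨L.getD i 0 - 1, by grind⟩
  have hg : Function.Injective g := fun i j hij => by
    have hi := mem_Icc.1 (hmem i)
    have hj := mem_Icc.1 (hmem j)
    simp only [g, Fin.ext_iff] at hij
    exact Fin.ext ((getD_inj hL (by omega) (by omega)).1 (by omega))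
  refine ⟨Equiv.ofBijective g (Finite.injective_iff_bijective.1 hg), ?_⟩
  refine List.ext_getElem (by simp [length_word, hlen]) fun i h₁ h₂ => ?_
  have := hmem ⟨i, by omega⟩
  simp only [word, List.getElem_ofFn, Equiv.ofBijective_apply, g, mem_Icc] at this ⊢
  rw [List.getD_eq_getElem _ _ h₂] at this ⊢
  omega

theorem Des_eq (σ : Equiv.Perm (Fin n)) : Des σ = (descents (word σ)).image (· + 1) := by
  ext i
  simp only [Des, mem_filter, mem_Icc, mem_image, mem_descents, length_word, entry_eq_getD]
  constructor
  · rintro ⟨hi, h⟩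
    exact ⟨i - 1, by grind⟩
  · rintro ⟨j, hj, rfl⟩
    grind

theorem Destop_eq (σ : Equiv.Perm (Fin n)) : Destop σ = descTops (word σ) := by
  simp [Destop, descTops, Des_eq, image_image, Function.comp_def, entry_eq_getD]

theorem Desbot_eq (σ : Equiv.Perm (Fin n)) : Desbot σ = descBots (word σ) := by
  simp [Desbot, descBots, Des_eq, image_image, Function.comp_def, entry_eq_getD]

theorem entry_mem_Icc (σ : Equiv.Perm (Fin n)) {i : ℕ} (h₁ : 1 ≤ i) (h₂ : i ≤ n) :
    entry σ i ∈ Icc 1 n := by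
  rw [entry_eq_getD, ← toFinset_word σ, List.mem_toFinset]
  grind [length_word]

theorem occ31_2_eq_sum (σ : Equiv.Perm (Fin n)) :
    occ31_2 σ = ∑ v ∈ Icc 1 n, leftStraddles (word σ) v := by
  rw [occ31_2, card_eq_sum_card_fiberwise (f := fun p => entry σ p.2) (t := Icc 1 n) ?_]
  · refine sum_congr rfl fun v hv => ?_
    have hvw : v ∈ word σ := by rw [← List.mem_toFinset, toFinset_word]; exact hv
    have hL := nodup_word σ
    have hlen := length_word σ
    -- an occurrence `(m, j)` with `σ(j) = v` is the straddling descent at 0-based index `m - 1`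
    -- of the word, and `j - 1` is the index of `v` in it
    refine card_nbij' (fun p => p.1 - 1) (fun i => (i + 1, (word σ).idxOf v + 1)) ?_ ?_ ?_ ?_ <;>
    · intro p hp
      simp only [coe_filter, Set.mem_ofPred_eq, entry_eq_getD, mem_straddles] at hp ⊢
      grind
  · intro p hp
    simp only [coe_filter, mem_product, mem_Icc, Set.mem_ofPred_eq] at hp
    exact entry_mem_Icc σ hp.1.2.1 hp.1.2.2

theorem occ2_31_eq_sum (σ : Equiv.Perm (Fin n)) :
    occ2_31 σ = ∑ v ∈ Icc 1 n, rightStraddles (word σ) v := by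
  rw [occ2_31, card_eq_sum_card_fiberwise (f := fun p => entry σ p.1) (t := Icc 1 n) ?_]
  · refine sum_congr rfl fun v hv => ?_
    have hvw : v ∈ word σ := by rw [← List.mem_toFinset, toFinset_word]; exact hv
    have hL := nodup_word σ
    have hlen := length_word σ
    refine card_nbij' (fun p => p.2 - 1) (fun i => ((word σ).idxOf v + 1, i + 1)) ?_ ?_ ?_ ?_ <;>
    · intro p hp
      simp only [coe_filter, Set.mem_ofPred_eq, entry_eq_getD, mem_straddles] at hp ⊢
      grind
  · intro p hp
    simp only [coe_filter, mem_product, mem_Icc, Set.mem_ofPred_eq] at hp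
    exact entry_mem_Icc σ hp.1.1.1 (by omega)

theorem realizes_word (σ : Equiv.Perm (Fin n)) :
    Realizes (word σ) (Icc 1 n) (Destop σ) (Desbot σ) (leftStraddles (word σ)) :=
  ⟨nodup_word σ, toFinset_word σ, (Destop_eq σ).symm, (Desbot_eq σ).symm, fun _ _ => rfl⟩

theorem exists_dual (σ : Equiv.Perm (Fin n)) : ∃ τ : Equiv.Perm (Fin n),
    Realizes (word τ) (Icc 1 n) (Destop σ) (Desbot σ) (rightStraddles (word σ)) := by
  have h := realizes_word σ
  have hf : ∀ v ∈ Icc 1 n, rightStraddles (word σ) v < sg (Destop σ) (Desbot σ) v :=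
    fun v hv => by have := h.add_rightStraddles hv; omega
  obtain ⟨L, hL⟩ := exists_realizes _ h.admissible hf
  obtain ⟨τ, rfl⟩ := exists_word_eq hL.nodup hL.toFinset_eq
  exact ⟨τ, hL⟩

noncomputable def dual (σ : Equiv.Perm (Fin n)) : Equiv.Perm (Fin n) :=
  (exists_dual σ).choose

theorem realizes_dual (σ : Equiv.Perm (Fin n)) :
    Realizes (word (dual σ)) (Icc 1 n) (Destop σ) (Desbot σ) (rightStraddles (word σ)) :=
  (exists_dual σ).choose_spec

theorem Destop_dual (σ : Equiv.Perm (Fin n)) : Destop (dual σ) = Destop σ := by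
  rw [Destop_eq, (realizes_dual σ).descTops_eq]

theorem Desbot_dual (σ : Equiv.Perm (Fin n)) : Desbot (dual σ) = Desbot σ := by
  rw [Desbot_eq, (realizes_dual σ).descBots_eq]

theorem rightStraddles_dual (σ : Equiv.Perm (Fin n)) {v : ℕ} (hv : v ∈ Icc 1 n) :
    rightStraddles (word (dual σ)) v = leftStraddles (word σ) v := by
  have h₁ := (realizes_dual σ).add_rightStraddles hv
  have h₂ := (realizes_word σ).add_rightStraddles hv
  omega

theorem occ2_31_dual (σ : Equiv.Perm (Fin n)) : occ2_31 (dual σ) = occ31_2 σ := by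
  rw [occ2_31_eq_sum, occ31_2_eq_sum]
  exact sum_congr rfl fun v hv => rightStraddles_dual σ hv

theorem occ31_2_dual (σ : Equiv.Perm (Fin n)) : occ31_2 (dual σ) = occ2_31 σ := by
  rw [occ31_2_eq_sum, occ2_31_eq_sum]
  exact sum_congr rfl (realizes_dual σ).leftStraddles_eq

theorem dual_dual (σ : Equiv.Perm (Fin n)) : dual (dual σ) = σ := by
  refine word_injective ((realizes_dual (dual σ)).unique ?_)
  rw [Destop_dual, Desbot_dual]
  exact { realizes_word σ with leftStraddles_eq := fun v hv => (rightStraddles_dual σ hv).symm }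

end Perm

end DescentWord

theorem occ_pair_equidistributed_general (n : ℕ) (T B : Finset ℕ) (a b : ℕ) :
    ((Finset.univ : Finset (Equiv.Perm (Fin n))).filter
        (fun σ => Destop σ = T ∧ Desbot σ = B ∧ occ2_31 σ = a ∧ occ31_2 σ = b)).card =
      ((Finset.univ : Finset (Equiv.Perm (Fin n))).filter
        (fun σ => Destop σ = T ∧ Desbot σ = B ∧ occ2_31 σ = b ∧ occ31_2 σ = a)).card := by
  refine Finset.card_nbij' DescentWord.dual DescentWord.dual ?_ ?_
    (fun σ _ => DescentWord.dual_dual σ) (fun σ _ => DescentWord.dual_dual σ) <;>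
  · intro σ hσ
    simp only [Finset.coe_filter, Finset.mem_univ, true_and, Set.mem_ofPred_eq,
      DescentWord.Destop_dual, DescentWord.Desbot_dual, DescentWord.occ2_31_dual,
      DescentWord.occ31_2_dual] at hσ ⊢
    exact ⟨hσ.1, hσ.2.1, hσ.2.2.2, hσ.2.2.1⟩

/-- The pairs of statistics `(2-31, 31-2)` and `(31-2, 2-31)` are jointly
equidistributed on permutations of `[n]` with fixed descent top set and descent bottom set. -/
theorem occ_pair_equidistributed (n : ℕ) (T B : Finset ℕ)
    (hT : T ⊆ Finset.Icc 1 n) (hB : B ⊆ Finset.Icc 1 n) (a b : ℕ) :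
    ((Finset.univ : Finset (Equiv.Perm (Fin n))).filter
        (fun σ => Destop σ = T ∧ Desbot σ = B ∧ occ2_31 σ = a ∧ occ31_2 σ = b)).card =
      ((Finset.univ : Finset (Equiv.Perm (Fin n))).filter
        (fun σ => Destop σ = T ∧ Desbot σ = B ∧ occ2_31 σ = b ∧ occ31_2 σ = a)).card :=
  occ_pair_equidistributed_general n T B a b
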